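/- Let X_1, X_2, ... be i.i.d. Laplace(μ, 2σ) random variables with density f(x) = (1/(4σ)) exp(−|x − μ|/(2σ)) and let μ*_n be the sample median. Then there exist N ∈ ℕ and γ > 0 (depending only on σ) such that for all n ≥ N and all t ≥ γ, P(μ*_n − μ ≥ t) ≤ (1/2) e^{−t}; by symmetry, P(|μ*_n − μ| ≥ t) ≤ e^{−t} for all n ≥ N, t ≥ γ. -/

import Mathlib

open MeasureTheory ProbabilityTheory

noncomputable def orderStat {n : ℕ} (x : Fin n → ℝ) (k : Fin n) : ℝ :=
  (x ∘ Tuple.sort x) k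

noncomputable def sampleMedian (n : ℕ) (hn : 0 < n) (x : Fin n → ℝ) : ℝ :=
  if n % 2 = 1 then orderStat x ⟨n / 2, Nat.div_lt_self hn one_lt_two⟩
  else (orderStat x ⟨n / 2 - 1, lt_of_le_of_lt (Nat.sub_le _ _) (Nat.div_lt_self hn one_lt_two)⟩
      + orderStat x ⟨n / 2, Nat.div_lt_self hn one_lt_two⟩) / 2

section TailLemmas
open Real Set

lemma lint_tail (c s a : ℝ) (hc : 0 ≤ c) (hs : 0 < s) :
    ∫⁻ x in Ioi a, ENNReal.ofReal (c * Real.exp (-(x * s)))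
      = ENNReal.ofReal (c * s⁻¹ * Real.exp (-(a * s))) := by
  have hint : IntegrableOn (fun x => c * Real.exp (-(x * s))) (Ioi a) := by
    have := (exp_neg_integrableOn_Ioi a hs).const_mul c
    simpa [mul_comm, IntegrableOn] using this
  rw [← MeasureTheory.ofReal_integral_eq_lintegral_ofReal hint
    (Filter.Eventually.of_forall fun x => by positivity)]
  congr 1
  rw [MeasureTheory.integral_const_mul]
  have := integral_comp_mul_right_Ioi (fun y => Real.exp (-y)) a hs
  simp only [smul_eq_mul] at this
  rw [this, integral_exp_neg_Ioi]
  ring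

lemma laplace_upper_tail (μ σ t : ℝ) (hσ : 0 < σ) (ht : 0 ≤ t) :
    ∫⁻ x in Ici (μ + t), ENNReal.ofReal (1 / (4 * σ) * Real.exp (-|x - μ| / (2 * σ)))
      = ENNReal.ofReal ((1 / 2) * Real.exp (-(t / (2 * σ)))) := by
  rw [← MeasureTheory.setLIntegral_congr Ioi_ae_eq_Ici]
  have hcong : ∀ x ∈ Ioi (μ + t),
      ENNReal.ofReal (1 / (4 * σ) * Real.exp (-|x - μ| / (2 * σ)))
        = ENNReal.ofReal ((1 / (4 * σ) * Real.exp (μ * (2 * σ)⁻¹)) * Real.exp (-(x * (2 * σ)⁻¹))) := by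
    intro x hx
    have hxμ : 0 ≤ x - μ := by simp only [mem_Ioi] at hx; linarith
    rw [abs_of_nonneg hxμ]
    congr 1
    rw [mul_assoc, ← Real.exp_add]
    congr 1
    field_simp
    ring
  rw [MeasureTheory.setLIntegral_congr_fun measurableSet_Ioi
    hcong]
  rw [lint_tail _ _ _ (by positivity) (by positivity)]
  congr 1
  have h2 : (1:ℝ)/(4*σ) * (2*σ) = 1/2 := by field_simp; ring
  have h3 : rexp (μ*(2*σ)⁻¹) * rexp (-((μ+t)*(2*σ)⁻¹)) = rexp (-(t/(2*σ))) := by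
    rw [← Real.exp_add]; congr 1; field_simp; ring
  rw [inv_inv]
  rw [show (1/(4*σ) * rexp (μ*(2*σ)⁻¹) * (2*σ) * rexp (-((μ+t)*(2*σ)⁻¹)) : ℝ)
      = (1/(4*σ) * (2*σ)) * (rexp (μ*(2*σ)⁻¹) * rexp (-((μ+t)*(2*σ)⁻¹))) from by ring, h2, h3]


lemma laplace_lower_tail (μ σ t : ℝ) (hσ : 0 < σ) (ht : 0 ≤ t) :
    ∫⁻ x in Iic (μ - t), ENNReal.ofReal (1 / (4 * σ) * Real.exp (-|x - μ| / (2 * σ)))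
      = ENNReal.ofReal ((1 / 2) * Real.exp (-(t / (2 * σ)))) := by
  have hm : Measurable fun x : ℝ => ENNReal.ofReal (1 / (4 * σ) * Real.exp (-|x - μ| / (2 * σ))) := by
    apply Measurable.ennreal_ofReal
    fun_prop
  have hrestr : Measure.map Neg.neg (volume.restrict (Ici (-μ + t)))
      = volume.restrict (Iic (μ - t)) := by
    rw [show Ici (-μ + t) = Neg.neg ⁻¹' (Iic (μ - t)) by
          ext x; simp only [mem_Ici, mem_preimage, mem_Iic]; constructor <;> intro <;> linarith,
      ← Measure.restrict_map measurable_neg measurableSet_Iic, Measure.map_neg_eq_self]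
  rw [← hrestr, MeasureTheory.lintegral_map hm measurable_neg]
  have := laplace_upper_tail (-μ) σ t hσ ht
  rw [← this]
  apply MeasureTheory.lintegral_congr
  intro x
  congr 3
  rw [show -x - μ = -(x - -μ) by ring, abs_neg]

end TailLemmas

section CountLemmas
open Finset

lemma card_ge_of_orderStat_ge {n : ℕ} (x : Fin n → ℝ) (k : Fin n) (a : ℝ)
    (h : a ≤ orderStat x k) :
    n - k.val ≤ (univ.filter fun i : Fin n => a ≤ x i).card := by
  have hsub : (Finset.Ici k).image (Tuple.sort x) ⊆ univ.filter fun i : Fin n => a ≤ x i := by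
    intro i hi
    simp only [mem_image, Finset.mem_Ici] at hi
    obtain ⟨j, hj, rfl⟩ := hi
    simp only [mem_filter, mem_univ, true_and]
    exact le_trans h (Tuple.monotone_sort x hj)
  calc n - k.val = (Finset.Ici k).card := (Fin.card_Ici k).symm
    _ = ((Finset.Ici k).image (Tuple.sort x)).card :=
        (Finset.card_image_of_injective _ (Tuple.sort x).injective).symm
    _ ≤ _ := Finset.card_le_card hsub

lemma card_ge_of_orderStat_le {n : ℕ} (x : Fin n → ℝ) (k : Fin n) (a : ℝ)
    (h : orderStat x k ≤ a) :
    k.val + 1 ≤ (univ.filter fun i : Fin n => x i ≤ a).card := by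
  have hsub : (Finset.Iic k).image (Tuple.sort x) ⊆ univ.filter fun i : Fin n => x i ≤ a := by
    intro i hi
    simp only [mem_image, Finset.mem_Iic] at hi
    obtain ⟨j, hj, rfl⟩ := hi
    simp only [mem_filter, mem_univ, true_and]
    exact le_trans (Tuple.monotone_sort x hj) h
  calc k.val + 1 = (Finset.Iic k).card := (Fin.card_Iic k).symm
    _ = ((Finset.Iic k).image (Tuple.sort x)).card :=
        (Finset.card_image_of_injective _ (Tuple.sort x).injective).symm
    _ ≤ _ := Finset.card_le_card hsub

lemma orderStat_le_orderStat {n : ℕ} (x : Fin n → ℝ) {j k : Fin n} (h : j ≤ k) :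
    orderStat x j ≤ orderStat x k := Tuple.monotone_sort x h

lemma median_upper_count {n : ℕ} (hn : 0 < n) (x : Fin n → ℝ) (a : ℝ)
    (h : a ≤ sampleMedian n hn x) :
    n - n / 2 ≤ (univ.filter fun i : Fin n => a ≤ x i).card := by
  unfold sampleMedian at h
  by_cases hpar : n % 2 = 1
  · rw [if_pos hpar] at h
    exact card_ge_of_orderStat_ge x _ a h
  · rw [if_neg hpar] at h
    have hle : orderStat x ⟨n / 2 - 1, lt_of_le_of_lt (Nat.sub_le _ _) (Nat.div_lt_self hn one_lt_two)⟩
        ≤ orderStat x ⟨n / 2, Nat.div_lt_self hn one_lt_two⟩ :=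
      orderStat_le_orderStat x (by simp [Fin.mk_le_mk])
    exact card_ge_of_orderStat_ge x ⟨n / 2, Nat.div_lt_self hn one_lt_two⟩ a (by linarith)

lemma median_lower_count {n : ℕ} (hn : 0 < n) (x : Fin n → ℝ) (a : ℝ)
    (h : sampleMedian n hn x ≤ a) :
    n - n / 2 ≤ (univ.filter fun i : Fin n => x i ≤ a).card := by
  unfold sampleMedian at h
  by_cases hpar : n % 2 = 1
  · rw [if_pos hpar] at h
    have := card_ge_of_orderStat_le x _ a h
    simp only at this
    omega
  · rw [if_neg hpar] at h
    have hle : orderStat x ⟨n / 2 - 1, lt_of_le_of_lt (Nat.sub_le _ _) (Nat.div_lt_self hn one_lt_two)⟩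
        ≤ orderStat x ⟨n / 2, Nat.div_lt_self hn one_lt_two⟩ :=
      orderStat_le_orderStat x (by simp [Fin.mk_le_mk])
    have := card_ge_of_orderStat_le x
      ⟨n / 2 - 1, lt_of_le_of_lt (Nat.sub_le _ _) (Nat.div_lt_self hn one_lt_two)⟩ a (by linarith)
    simp only at this
    omega

end CountLemmas

section UnionBound
open Finset
open scoped ENNReal Classical

lemma count_event_bound {Ω : Type*} [MeasurableSpace Ω] (P : Measure Ω)
    (n k : ℕ) (X : ℕ → Ω → ℝ)
    (hindep : iIndepFun X P)
    (A : Set ℝ) (hA : MeasurableSet A) (q : ℝ≥0∞) (hq : ∀ i, P (X i ⁻¹' A) ≤ q) :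
    P {ω | k ≤ (univ.filter fun i : Fin n => X i.val ω ∈ A).card}
      ≤ (n.choose k) * q ^ k := by
  have hsub : {ω | k ≤ (univ.filter fun i : Fin n => X i.val ω ∈ A).card}
      ⊆ ⋃ S ∈ Finset.powersetCard k (univ : Finset (Fin n)), ⋂ i ∈ S, X i.val ⁻¹' A := by
    intro ω hω
    obtain ⟨S, hS, hcard⟩ := Finset.exists_subset_card_eq hω
    refine Set.mem_iUnion.mpr ⟨S, Set.mem_iUnion.mpr
      ⟨Finset.mem_powersetCard.mpr ⟨Finset.subset_univ _, hcard⟩,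
        Set.mem_biInter fun i hi => ?_⟩⟩
    have := hS hi
    simp only [mem_filter] at this
    exact this.2
  refine le_trans (measure_mono hsub) (le_trans (measure_biUnion_finset_le _ _) ?_)
  have hterm : ∀ S ∈ Finset.powersetCard k (univ : Finset (Fin n)),
      P (⋂ i ∈ S, X i.val ⁻¹' A) ≤ q ^ k := by
    intro S hS
    have hcard : S.card = k := (Finset.mem_powersetCard.mp hS).2
    have himg : (⋂ i ∈ S, X i.val ⁻¹' A) = ⋂ j ∈ S.image Fin.val, X j ⁻¹' A := by
      rw [Finset.set_biInter_finset_image]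
    rw [himg, hindep.measure_inter_preimage_eq_mul (S.image Fin.val)
      (sets := fun _ => A) (fun i _ => hA)]
    calc ∏ j ∈ S.image Fin.val, P (X j ⁻¹' A) ≤ ∏ _j ∈ S.image Fin.val, q :=
          Finset.prod_le_prod' fun j _ => hq j
      _ = q ^ k := by
          rw [Finset.prod_const, Finset.card_image_of_injective _ Fin.val_injective, hcard]
  calc ∑ S ∈ Finset.powersetCard k (univ : Finset (Fin n)), P (⋂ i ∈ S, X i.val ⁻¹' A)
      ≤ ∑ _S ∈ Finset.powersetCard k (univ : Finset (Fin n)), q ^ k := Finset.sum_le_sum hterm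
    _ = (n.choose k) * q ^ k := by
        rw [Finset.sum_const, Finset.card_powersetCard, Finset.card_univ, Fintype.card_fin,
          nsmul_eq_mul]

end UnionBound

section Arith
open Real

lemma choose_le_two_pow' (n k : ℕ) : n.choose k ≤ 2 ^ n := by
  by_cases h : k ≤ n
  · calc n.choose k ≤ ∑ i ∈ Finset.range (n + 1), n.choose i :=
        Finset.single_le_sum (fun i _ => Nat.zero_le _) (Finset.mem_range.mpr (Nat.lt_succ_of_le h))
    _ = 2 ^ n := Nat.sum_range_choose n
  · rw [Nat.choose_eq_zero_of_lt (lt_of_not_ge h)]; positivity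

lemma arith_bound (σ t : ℝ) (n : ℕ) (hσ : 0 < σ) (hn2 : 2 ≤ n) (hn8 : 8 * σ ≤ n)
    (ht : 8 * σ * Real.log 2 ≤ t) (ht1 : 1 ≤ t) :
    (n.choose (n - n / 2) : ℝ) * ((1 / 2) * Real.exp (-(t / (2 * σ)))) ^ (n - n / 2)
      ≤ (1 / 2) * Real.exp (-t) := by
  set k := n - n / 2 with hk
  have hkn : k ≤ n := Nat.sub_le _ _
  have h2k : n ≤ 2 * k := by omega
  have hchoose : (n.choose k : ℝ) ≤ 2 ^ n := by
    exact_mod_cast Nat.cast_le.mpr (choose_le_two_pow' n k)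
  have hepos : (0:ℝ) < Real.exp (-(t / (2 * σ))) := Real.exp_pos _
  have hfactor : ((1 / 2 : ℝ) * Real.exp (-(t / (2 * σ)))) ^ k
      = (1 / 2 : ℝ) ^ k * Real.exp (-(t / (2 * σ))) ^ k := mul_pow _ _ _
  have step1 : (n.choose k : ℝ) * ((1 / 2) * Real.exp (-(t / (2 * σ)))) ^ k
      ≤ 2 ^ n * ((1 / 2) ^ k * Real.exp (-(t / (2 * σ))) ^ k) := by
    rw [hfactor] at *
    apply mul_le_mul_of_nonneg_right hchoose
    positivity
  have hpow2 : (2:ℝ) ^ n * (1 / 2 : ℝ) ^ k = 2 ^ (n - k) := by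
    rw [one_div, inv_pow, ← Nat.sub_add_cancel hkn, pow_add]
    field_simp
    rw [Nat.add_sub_cancel]
  have hnk : n - k = n / 2 := by omega
  have hexp : Real.exp (-(t / (2 * σ))) ^ k = Real.exp (-(k * (t / (2 * σ)))) := by
    rw [← Real.exp_nat_mul]; ring_nf
  -- goal reduces to 2 ^ (n/2) * exp (-(k * t/(2σ))) ≤ (1/2) exp (-t)
  have key : (2:ℝ) ^ (n / 2) * Real.exp (-(k * (t / (2 * σ)))) ≤ (1 / 2) * Real.exp (-t) := by
    have h2 : (2:ℝ) ^ (n / 2) = Real.exp ((n / 2 : ℕ) * Real.log 2) := by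
      rw [Real.exp_nat_mul, Real.exp_log two_pos]
    have hhalf : (1 / 2 : ℝ) = Real.exp (-Real.log 2) := by
      rw [Real.exp_neg, Real.exp_log two_pos]; norm_num
    rw [h2, hhalf, ← Real.exp_add, ← Real.exp_add]
    apply Real.exp_le_exp.mpr
    -- need: (n/2) log 2 - k t/(2σ) ≤ -log 2 - t
    have hlog2 : (0:ℝ) < Real.log 2 := Real.log_pos one_lt_two
    have hm : ((n / 2 : ℕ) : ℝ) + 1 ≤ (n : ℕ) := by
      have : (n / 2 : ℕ) + 1 ≤ n := by omega
      exact_mod_cast this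
    have hkt : (n:ℝ) * t / (2 * (2 * σ)) ≤ (k:ℝ) * (t / (2 * σ)) := by
      have hk2 : (n:ℝ) ≤ 2 * k := by exact_mod_cast h2k
      have ht0 : 0 < t := by linarith
      rw [show (k:ℝ) * (t / (2 * σ)) = (k:ℝ) * t / (2 * σ) by ring,
        div_le_div_iff₀ (by positivity) (by positivity)]
      nlinarith [mul_nonneg (mul_nonneg ht0.le hσ.le) (sub_nonneg.mpr hk2)]
    have hpart1 : t ≤ (n:ℝ) * t / (2 * (2 * σ)) / 2 + 0 := by
      have h8 : (8:ℝ) * σ ≤ n := hn8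
      rw [add_zero, le_div_iff₀ (by norm_num)]
      rw [le_div_iff₀ (by positivity)]
      nlinarith
    have hpart2 : (((n / 2 : ℕ) : ℝ) + 1) * Real.log 2 ≤ (n:ℝ) * t / (2 * (2 * σ)) / 2 := by
      have : (((n / 2 : ℕ) : ℝ) + 1) * Real.log 2 ≤ (n:ℝ) * Real.log 2 := by
        apply mul_le_mul_of_nonneg_right hm hlog2.le
      refine this.trans ?_
      rw [le_div_iff₀ (by norm_num), le_div_iff₀ (by positivity)]
      nlinarith
    nlinarith [hkt]
  calc (n.choose k : ℝ) * ((1 / 2) * Real.exp (-(t / (2 * σ)))) ^ k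
      ≤ 2 ^ n * ((1 / 2) ^ k * Real.exp (-(t / (2 * σ))) ^ k) := step1
    _ = 2 ^ (n / 2) * Real.exp (-(k * (t / (2 * σ)))) := by
        rw [← mul_assoc, hpow2, hnk, hexp]
    _ ≤ (1 / 2) * Real.exp (-t) := key

end Arith

open scoped ENNReal Classical in
/-- exponential tail bound for the sample median of i.i.d. Laplace(μ, 2σ)
random variables: there exist `N` and `γ > 0` such that for `n ≥ N` and `t ≥ γ`,
`P(μ*_n − μ ≥ t) ≤ (1/2) e^{−t}` and `P(|μ*_n − μ| ≥ t) ≤ e^{−t}`. -/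
theorem laplace_median_exponential_tail
    {Ω : Type*} [MeasurableSpace Ω] (P : Measure Ω) [IsProbabilityMeasure P]
    (μ : ℝ) (σ : ℝ) (hσ : 0 < σ) (X : ℕ → Ω → ℝ)
    (hXmeas : ∀ i, Measurable (X i))
    (hindep : iIndepFun X P)
    (hident : ∀ i, IdentDistrib (X i) (X 0) P P)
    (hlaw : P.map (X 0)
      = volume.withDensity (fun x => ENNReal.ofReal (1 / (4 * σ) * Real.exp (-|x - μ| / (2 * σ))))) :
    ∃ N : ℕ, ∃ γ : ℝ, 0 < γ ∧ ∀ n : ℕ, ∀ hn : 0 < n, N ≤ n → ∀ t : ℝ, γ ≤ t →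
      P {ω | t ≤ sampleMedian n hn (fun i : Fin n => X i ω) - μ}
          ≤ ENNReal.ofReal ((1 / 2) * Real.exp (-t)) ∧
      P {ω | t ≤ |sampleMedian n hn (fun i : Fin n => X i ω) - μ|}
          ≤ ENNReal.ofReal (Real.exp (-t)) := by
  refine ⟨max 2 ⌈8 * σ⌉₊, max 1 (8 * σ * Real.log 2), lt_of_lt_of_le one_pos (le_max_left _ _),
    fun n hn hN t ht => ?_⟩
  have ht1 : 1 ≤ t := le_trans (le_max_left _ _) ht
  have ht0 : 0 ≤ t := by linarith
  have htlog : 8 * σ * Real.log 2 ≤ t := le_trans (le_max_right _ _) ht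
  have hn2 : 2 ≤ n := le_trans (le_max_left _ _) hN
  have hn8 : 8 * σ ≤ (n : ℝ) :=
    le_trans (Nat.le_ceil _) (Nat.cast_le.mpr (le_trans (le_max_right _ _) hN))
  set k := n - n / 2 with hk
  set r : ℝ := (1 / 2) * Real.exp (-(t / (2 * σ))) with hr
  have hr0 : 0 ≤ r := by positivity
  have hmap : ∀ i, P.map (X i)
      = volume.withDensity (fun x => ENNReal.ofReal (1 / (4 * σ) * Real.exp (-|x - μ| / (2 * σ)))) :=
    fun i => ((hident i).map_eq).trans hlaw
  -- per-variable tail bounds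
  have hup : ∀ i, P (X i ⁻¹' Set.Ici (μ + t)) ≤ ENNReal.ofReal r := by
    intro i
    rw [← Measure.map_apply (hXmeas i) measurableSet_Ici, hmap i,
      withDensity_apply _ measurableSet_Ici, laplace_upper_tail μ σ t hσ ht0]
  have hlo : ∀ i, P (X i ⁻¹' Set.Iic (μ - t)) ≤ ENNReal.ofReal r := by
    intro i
    rw [← Measure.map_apply (hXmeas i) measurableSet_Iic, hmap i,
      withDensity_apply _ measurableSet_Iic, laplace_lower_tail μ σ t hσ ht0]
  -- final real bound
  have hfinal : ((n.choose k : ℕ) : ℝ≥0∞) * (ENNReal.ofReal r) ^ k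
      ≤ ENNReal.ofReal ((1 / 2) * Real.exp (-t)) := by
    rw [← ENNReal.ofReal_pow hr0, ← ENNReal.ofReal_natCast, ← ENNReal.ofReal_mul (by positivity)]
    exact ENNReal.ofReal_le_ofReal (arith_bound σ t n hσ hn2 hn8 htlog ht1)
  -- upper-tail event
  have hupper : P {ω | t ≤ sampleMedian n hn (fun i : Fin n => X i ω) - μ}
      ≤ ENNReal.ofReal ((1 / 2) * Real.exp (-t)) := by
    refine le_trans (le_trans (measure_mono ?_)
      (count_event_bound P n k X hindep (Set.Ici (μ + t)) measurableSet_Ici _ hup)) hfinal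
    intro ω hω
    simp only [Set.mem_setOf_eq] at hω ⊢
    have := median_upper_count hn (fun i : Fin n => X i ω) (μ + t) (by linarith)
    refine le_trans this (Finset.card_le_card ?_)
    intro i hi
    simp only [Finset.mem_filter, Set.mem_Ici] at hi ⊢
    exact ⟨hi.1, hi.2⟩
  have hlower : P {ω | sampleMedian n hn (fun i : Fin n => X i ω) ≤ μ - t}
      ≤ ENNReal.ofReal ((1 / 2) * Real.exp (-t)) := by
    refine le_trans (le_trans (measure_mono ?_)
      (count_event_bound P n k X hindep (Set.Iic (μ - t)) measurableSet_Iic _ hlo)) hfinal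
    intro ω hω
    simp only [Set.mem_setOf_eq] at hω ⊢
    have := median_lower_count hn (fun i : Fin n => X i ω) (μ - t) hω
    refine le_trans this (Finset.card_le_card ?_)
    intro i hi
    simp only [Finset.mem_filter, Set.mem_Iic] at hi ⊢
    exact ⟨hi.1, hi.2⟩
  refine ⟨hupper, ?_⟩
  have hsub : {ω | t ≤ |sampleMedian n hn (fun i : Fin n => X i ω) - μ|}
      ⊆ {ω | t ≤ sampleMedian n hn (fun i : Fin n => X i ω) - μ}
        ∪ {ω | sampleMedian n hn (fun i : Fin n => X i ω) ≤ μ - t} := by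
    intro ω hω
    simp only [Set.mem_setOf_eq, Set.mem_union] at hω ⊢
    rcases le_abs.mp hω with h | h
    · exact Or.inl h
    · exact Or.inr (by linarith)
  refine le_trans (measure_mono hsub) (le_trans (measure_union_le _ _) ?_)
  refine le_trans (add_le_add hupper hlower) ?_
  rw [← ENNReal.ofReal_add (by positivity) (by positivity)]
  apply ENNReal.ofReal_le_ofReal
  linarith
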